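/- arXiv:1201.0435 — 2 statements merged into one kernel-verified Lean document; each statement's English description precedes it below -/
import Mathlib

section
/- Let N=(V,E,s,t) be an acyclic unit-capacity point-to-point network whose edge set can be partitioned into C_N(s,t) pairwise edge-disjoint s-t paths. Then for every edge e ∈ E, deleting e decreases the maximum s-t flow by exactly 1, i.e., C_{N\{e}}(s,t) = C_N(s,t) − 1. -/
/-!
Fix `e` and let `S` be the set of vertices from which `tail e` is reachable. No edge enters `S`;
`s ∈ S` because the decomposition path through `e` passes `tail e`, while `t ∉ S` and
`head e ∉ S` by acyclicity. A path can therefore leave `S` only once, so the decomposition paths,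
which cover every edge, give `|δ⁺(S)| ≤ C_N(s,t)`, with `e ∈ δ⁺(S)`. Every `s`-`t` path of
`N \ {e}` uses an edge of `δ⁺(S) \ {e}`, hence `C_{N\{e}}(s,t) ≤ C_N(s,t) - 1`; dropping the
path through `e` from the decomposition gives the reverse inequality.
-/

/-- A point-to-point network: a finite directed multigraph with edge set
`edges`, endpoint maps `tail`/`head`, source `s` and sink `t`; every edge has
unit capacity. -/
structure Network (V : Type) (ε : Type) where
  edges : Finset ε
  tail : ε → V
  head : ε → V
  s : V
  t : V

namespace Network

variable {V ε : Type} [DecidableEq ε]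

/-- `p` is a nonempty directed walk from `u` to `v` using edges of `N`. -/
def IsWalk (N : Network V ε) (u v : V) (p : List ε) : Prop :=
  p ≠ [] ∧ (∀ e ∈ p, e ∈ N.edges) ∧
  (∀ i, ∀ h : i + 1 < p.length,
    N.head (p.get ⟨i, Nat.lt_of_succ_lt h⟩) = N.tail (p.get ⟨i + 1, h⟩)) ∧
  (∀ h : 0 < p.length, N.tail (p.get ⟨0, h⟩) = u) ∧
  (∀ h : 0 < p.length, N.head (p.get ⟨p.length - 1, Nat.sub_lt h Nat.one_pos⟩) = v)

/-- An `s`-`t` path: an edge-simple walk from the source to the sink. -/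
def IsPath (N : Network V ε) (p : List ε) : Prop :=
  N.IsWalk N.s N.t p ∧ p.Nodup

/-- `v` is reachable from `u` by a directed walk (or `u = v`). -/
def Reach (N : Network V ε) (u v : V) : Prop :=
  u = v ∨ ∃ p, N.IsWalk u v p

/-- Reachability within the subgraph induced by the vertex set `S`. -/
def ReachIn (N : Network V ε) (S : Set V) (u v : V) : Prop :=
  u = v ∨ ∃ p, N.IsWalk u v p ∧ ∀ e ∈ p, N.tail e ∈ S ∧ N.head e ∈ S

/-- An edge-simple directed cycle. -/
def IsCycle (N : Network V ε) (p : List ε) : Prop :=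
  ∃ u, N.IsWalk u u p ∧ p.Nodup

def Acyclic (N : Network V ε) : Prop := ∀ p, ¬ N.IsCycle p

/-- A collection of pairwise edge-disjoint `s`-`t` paths (an integral flow in a
unit-capacity network). -/
def IsFlowList (N : Network V ε) (fs : List (List ε)) : Prop :=
  (∀ p ∈ fs, N.IsPath p) ∧ fs.Pairwise fun p q => ∀ e ∈ p, e ∉ q

def HasFlow (N : Network V ε) (n : ℕ) : Prop :=
  ∃ fs, N.IsFlowList fs ∧ fs.length = n

/-- The maximum-flow value `C_N(s,t)`: the maximum number of pairwise
edge-disjoint directed `s`-`t` paths. -/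
noncomputable def maxFlow (N : Network V ε) : ℕ :=
  sSup {n | N.HasFlow n}

/-- Delete the edges of `F` from the network. -/
def del (N : Network V ε) (F : Finset ε) : Network V ε :=
  { N with edges := N.edges \ F }

/-- `F` is a `k`-th order capacity factor of `N`:
`C_{N\F} ≤ C_N − k`, and `C_{N\F'} > C_N − k` for every proper `F' ⊊ F`. -/
def IsKCF (N : Network V ε) (k : ℕ) (F : Finset ε) : Prop :=
  F.Nonempty ∧ F ⊆ N.edges ∧ (N.del F).maxFlow + k ≤ N.maxFlow ∧
    ∀ F' ⊂ F, N.maxFlow < (N.del F').maxFlow + k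

/-- `F` is a capacity factor of `N`: deleting `F` decreases the maximum flow,
while deleting any proper subset does not. -/
def IsCF (N : Network V ε) (F : Finset ε) : Prop :=
  F.Nonempty ∧ F ⊆ N.edges ∧ (N.del F).maxFlow < N.maxFlow ∧
    ∀ F' ⊂ F, (N.del F').maxFlow = N.maxFlow

/-- The set of edges used by a flow given as a list of paths. -/
def usedEdges (fs : List (List ε)) : Finset ε := fs.flatten.toFinset

/-- Residual network w.r.t. a set of used (unit-capacity) edges: used edges
are reversed, unused edges keep their direction. -/
def residual (N : Network V ε) (used : Finset ε) : Network V ε :=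
  { edges := N.edges,
    tail := fun e => if e ∈ used then N.head e else N.tail e,
    head := fun e => if e ∈ used then N.tail e else N.head e,
    s := N.s, t := N.t }

/-- The same network with sink replaced by `v`. -/
def withSink (N : Network V ε) (v : V) : Network V ε := { N with t := v }

end Network

theorem List.length_le_card_of_pairwise_disjoint {α : Type*} [DecidableEq α]
    {fs : List (List α)} (hfs : fs.Pairwise fun p q => ∀ e ∈ p, e ∉ q) {T : Finset α}
    (hT : ∀ q ∈ fs, ∃ f ∈ q, f ∈ T) : fs.length ≤ T.card := by
  induction fs generalizing T with
  | nil => simp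
  | cons p fs ih =>
    obtain ⟨hp, hfs⟩ := List.pairwise_cons.1 hfs
    obtain ⟨f, hfp, hfT⟩ := hT p List.mem_cons_self
    have hfs_erase : fs.length ≤ (T.erase f).card := ih hfs fun q hq => by
      obtain ⟨g, hgq, hgT⟩ := hT q (List.mem_cons_of_mem _ hq)
      exact ⟨g, hgq, Finset.mem_erase.2 ⟨fun hgf => hp q hq f hfp (hgf ▸ hgq), hgT⟩⟩
    rw [List.length_cons, ← Finset.card_erase_add_one hfT]
    exact Nat.add_le_add_right hfs_erase 1

namespace Network

inductive Joins {V ε : Type} (N : Network V ε) : V → V → List ε → Prop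
  | single {e : ε} : e ∈ N.edges → N.Joins (N.tail e) (N.head e) [e]
  | cons {e : ε} {v : V} {p : List ε} :
      e ∈ N.edges → N.Joins (N.head e) v p → N.Joins (N.tail e) v (e :: p)

section

variable {V ε : Type} {N : Network V ε} {u v w : V} {e : ε} {p q : List ε}

theorem joins_cons_iff : N.Joins u v (e :: p) ↔
    e ∈ N.edges ∧ u = N.tail e ∧ (p = [] ∧ v = N.head e ∨ N.Joins (N.head e) v p) := by
  constructor
  · rintro (⟨he⟩ | ⟨he, h⟩)
    exacts [⟨he, rfl, .inl ⟨rfl, rfl⟩⟩, ⟨he, rfl, .inr h⟩]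
  · rintro ⟨he, rfl, ⟨rfl, rfl⟩ | h⟩
    exacts [.single he, .cons he h]

theorem isWalk_cons_iff [DecidableEq ε] : N.IsWalk u v (e :: p) ↔
    e ∈ N.edges ∧ u = N.tail e ∧ (p = [] ∧ v = N.head e ∨ N.IsWalk (N.head e) v p) := by
  cases p with
  | nil => simp [IsWalk, eq_comm]
  | cons f r =>
    simp only [IsWalk, List.get_eq_getElem]
    constructor
    · rintro ⟨-, hmem, hchain, htail, hhead⟩
      refine ⟨hmem e (by simp), (htail (by simp)).symm, .inr ⟨by simp,
        fun x hx => hmem x (by simp [hx]), fun i hi => hchain (i + 1) (by simpa using hi),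
        fun _ => (hchain 0 (by simp)).symm, fun _ => hhead (by simp)⟩⟩
    · rintro ⟨he, rfl, ⟨h, -⟩ | ⟨-, hmem, hchain, htail, hhead⟩⟩
      · simp at h
      refine ⟨by simp, List.forall_mem_cons.2 ⟨he, hmem⟩, ?_, fun _ => rfl,
        fun _ => hhead (by simp)⟩
      rintro (_ | i) hi
      exacts [(htail (by simp)).symm, hchain i (by simpa using hi)]

theorem isWalk_iff_joins [DecidableEq ε] : N.IsWalk u v p ↔ N.Joins u v p := by
  induction p generalizing u with
  | nil => exact iff_of_false (fun h => h.1 rfl) (by rintro ⟨⟩)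
  | cons e p ih => rw [isWalk_cons_iff, joins_cons_iff, ih]

theorem reach_iff [DecidableEq ε] : N.Reach u v ↔ u = v ∨ ∃ p, N.Joins u v p := by
  simp only [Reach, isWalk_iff_joins]

namespace Joins

theorem append (hp : N.Joins u v p) (hq : N.Joins v w q) : N.Joins u w (p ++ q) := by
  induction hp with
  | single he => exact .cons he hq
  | cons he _ ih => exact .cons he (ih hq)

theorem split_at (h : N.Joins u w (p ++ e :: q)) :
    (u = N.tail e ∨ ∃ r, N.Joins u (N.tail e) r) ∧ N.Joins (N.tail e) w (e :: q) := by
  induction p generalizing u with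
  | nil => exact ⟨.inl (joins_cons_iff.1 h).2.1, (joins_cons_iff.1 h).2.1 ▸ h⟩
  | cons a p ih =>
    obtain ⟨ha, rfl, ⟨hnil, -⟩ | h⟩ := joins_cons_iff.1 h
    · simp at hnil
    obtain ⟨hpre | ⟨r, hr⟩, hsuf⟩ := ih h
    exacts [⟨.inr ⟨[a], hpre ▸ .single ha⟩, hsuf⟩, ⟨.inr ⟨a :: r, .cons ha hr⟩, hsuf⟩]

theorem exists_nodup (h : N.Joins u v p) : ∃ q, N.Joins u v q ∧ q.Nodup := by
  induction h with
  | single he => exact ⟨_, .single he, List.nodup_singleton _⟩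
  | @cons e _ _ he _ ih =>
    obtain ⟨q, hq, hnd⟩ := ih
    by_cases heq : e ∈ q
    · obtain ⟨l₁, l₂, rfl⟩ := List.append_of_mem heq
      exact ⟨e :: l₂, hq.split_at.2, hnd.sublist (List.sublist_append_right _ _)⟩
    · exact ⟨e :: q, .cons he hq, List.nodup_cons.2 ⟨heq, hnd⟩⟩

end Joins

theorem Acyclic.not_joins_self [DecidableEq ε] (hA : N.Acyclic) : ¬ N.Joins u u p := fun h =>
  let ⟨q, hq, hnd⟩ := h.exists_nodup
  hA q ⟨u, isWalk_iff_joins.2 hq, hnd⟩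

theorem Acyclic.not_reach_of_joins [DecidableEq ε] (hA : N.Acyclic) (h : N.Joins u v p) :
    ¬ N.Reach v u := by
  rintro (rfl | ⟨q, hq⟩)
  exacts [hA.not_joins_self h, hA.not_joins_self (h.append (isWalk_iff_joins.1 hq))]

theorem Reach.of_head [DecidableEq ε] (he : e ∈ N.edges) (h : N.Reach (N.head e) v) :
    N.Reach (N.tail e) v := by
  rcases reach_iff.1 h with rfl | ⟨q, hq⟩
  exacts [reach_iff.2 (.inr ⟨[e], .single he⟩), reach_iff.2 (.inr ⟨e :: q, .cons he hq⟩)]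

end

section

variable {V ε : Type} {N : Network V ε} {S : Set V} {u v : V} {f g : ε} {p : List ε}

open Classical in
noncomputable def outEdges (N : Network V ε) (S : Set V) : Finset ε :=
  N.edges.filter fun f => N.tail f ∈ S ∧ N.head f ∉ S

theorem mem_outEdges : f ∈ N.outEdges S ↔ f ∈ N.edges ∧ N.tail f ∈ S ∧ N.head f ∉ S := by
  classical exact Finset.mem_filter

theorem outEdges_del [DecidableEq ε] (F : Finset ε) :
    (N.del F).outEdges S = N.outEdges S \ F := by
  ext f
  simp only [mem_outEdges, Finset.mem_sdiff, del]
  tauto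

namespace Joins

theorem exists_mem_outEdges (h : N.Joins u v p) (hu : u ∈ S) (hv : v ∉ S) :
    ∃ f ∈ p, f ∈ N.outEdges S := by
  induction h with
  | single he => exact ⟨_, List.mem_singleton_self _, mem_outEdges.2 ⟨he, hu, hv⟩⟩
  | @cons e _ _ he _ ih =>
    by_cases hh : N.head e ∈ S
    · obtain ⟨f, hf, hfS⟩ := ih hh hv
      exact ⟨f, List.mem_cons_of_mem _ hf, hfS⟩
    · exact ⟨e, List.mem_cons_self, mem_outEdges.2 ⟨he, hu, hh⟩⟩

variable (hS : ∀ f ∈ N.edges, N.head f ∈ S → N.tail f ∈ S)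
include hS

theorem tail_notMem (h : N.Joins u v p) (hu : u ∉ S) : ∀ f ∈ p, N.tail f ∉ S := by
  induction h with
  | single => simpa using hu
  | cons he _ ih => exact List.forall_mem_cons.2 ⟨hu, ih fun hh => hu (hS _ he hh)⟩

theorem eq_of_mem_outEdges (h : N.Joins u v p) (hf : f ∈ p) (hg : g ∈ p)
    (hfS : f ∈ N.outEdges S) (hgS : g ∈ N.outEdges S) : f = g := by
  induction h with
  | single => simp_all
  | cons he hp ih =>
    have hfS' := mem_outEdges.1 hfS
    have hgS' := mem_outEdges.1 hgS
    rcases List.mem_cons.1 hf with rfl | hf' <;> rcases List.mem_cons.1 hg with rfl | hg'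
    · rfl
    · exact absurd hgS'.2.1 (hp.tail_notMem hS hfS'.2.2 g hg')
    · exact absurd hfS'.2.1 (hp.tail_notMem hS hgS'.2.2 f hf')
    · exact ih hf' hg'

end Joins

theorem card_outEdges_le_length {ps : List (List ε)}
    (hS : ∀ f ∈ N.edges, N.head f ∈ S → N.tail f ∈ S)
    (hwalk : ∀ p ∈ ps, ∃ u v, N.Joins u v p) (hcover : ∀ f ∈ N.edges, ∃ p ∈ ps, f ∈ p) :
    (N.outEdges S).card ≤ ps.length := by
  classical
  choose! φ hφps hφ using fun f (hf : f ∈ N.outEdges S) => hcover f (mem_outEdges.1 hf).1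
  calc (N.outEdges S).card ≤ ps.toFinset.card := by
        refine Finset.card_le_card_of_injOn φ (fun f hf => List.mem_toFinset.2 (hφps f hf)) ?_
        intro f hf g hg hfg
        obtain ⟨u, v, hp⟩ := hwalk _ (hφps g hg)
        exact hp.eq_of_mem_outEdges hS (hfg ▸ hφ f hf) (hφ g hg) hf hg
    _ ≤ ps.length := List.toFinset_card_le ps

end

section

variable {V ε : Type} [DecidableEq ε] {N : Network V ε} {S : Set V} {u v : V}
  {fs ps : List (List ε)} {p : List ε} {n : ℕ}

theorem hasFlow_bddAbove (N : Network V ε) : BddAbove {n | N.HasFlow n} := by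
  refine ⟨N.edges.card, ?_⟩
  rintro _ ⟨fs, hf, rfl⟩
  refine List.length_le_card_of_pairwise_disjoint hf.2 fun q hq => ?_
  obtain ⟨⟨hne, hedges, -⟩, -⟩ := hf.1 q hq
  obtain ⟨f, hf⟩ := List.exists_mem_of_ne_nil q hne
  exact ⟨f, hf, hedges f hf⟩

theorem HasFlow.le_maxFlow (h : N.HasFlow n) : n ≤ N.maxFlow :=
  le_csSup N.hasFlow_bddAbove h

theorem maxFlow_le_card_outEdges (hs : N.s ∈ S) (ht : N.t ∉ S) :
    N.maxFlow ≤ (N.outEdges S).card := by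
  refine csSup_le ⟨0, [], ⟨by simp, .nil⟩, rfl⟩ ?_
  rintro _ ⟨fs, hf, rfl⟩
  exact List.length_le_card_of_pairwise_disjoint hf.2 fun q hq =>
    (isWalk_iff_joins.1 (hf.1 q hq).1).exists_mem_outEdges hs ht

theorem IsWalk.del {F : Finset ε} (h : N.IsWalk u v p) (hF : ∀ f ∈ p, f ∉ F) :
    (N.del F).IsWalk u v p :=
  ⟨h.1, fun f hf => Finset.mem_sdiff.2 ⟨h.2.1 f hf, hF f hf⟩, h.2.2⟩

theorem IsFlowList.del {F : Finset ε} (hf : N.IsFlowList fs) (hF : ∀ q ∈ fs, ∀ f ∈ q, f ∉ F) :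
    (N.del F).IsFlowList fs :=
  ⟨fun q hq => ⟨(hf.1 q hq).1.del (hF q hq), (hf.1 q hq).2⟩, hf.2⟩

theorem IsFlowList.hasFlow_del_of_subset (hf : N.IsFlowList ps) (hp : p ∈ ps)
    {F : Finset ε} (hF : ∀ f ∈ F, f ∈ p) : (N.del F).HasFlow (ps.length - 1) := by
  obtain ⟨l₁, l₂, rfl⟩ := List.append_of_mem hp
  have hsub : (l₁ ++ l₂).Sublist (l₁ ++ p :: l₂) := (List.sublist_cons_self p l₂).append_left l₁
  obtain ⟨-, hp₂, hp₁⟩ := List.pairwise_append.1 hf.2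
  refine ⟨l₁ ++ l₂, IsFlowList.del ⟨fun q hq => hf.1 q (hsub.subset hq), hf.2.sublist hsub⟩ ?_,
    by simp⟩
  intro q hq f hfq hfF
  rcases List.mem_append.1 hq with hq | hq
  exacts [hp₁ q hq p List.mem_cons_self f hfq (hF f hfF),
    (List.pairwise_cons.1 hp₂).1 q hq f (hF f hfF) hfq]

end

end Network

open Network

/-- In an acyclic network that decomposes into `C_N(s,t)` edge-disjoint `s`-`t`
paths, deleting any single edge decreases the max flow by exactly 1. -/
theorem del_single_edge_of_decomposition {V ε : Type} [DecidableEq ε]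
    (N : Network V ε) (hA : N.Acyclic)
    (ps : List (List ε)) (hlen : ps.length = N.maxFlow)
    (hflow : N.IsFlowList ps)
    (hcover : ∀ e ∈ N.edges, ∃ p ∈ ps, e ∈ p) :
    ∀ e ∈ N.edges, (N.del {e}).maxFlow + 1 = N.maxFlow := by
  intro e he
  obtain ⟨p, hp, hep⟩ := hcover e he
  have hwalks : ∀ q ∈ ps, N.Joins N.s N.t q := fun q hq => isWalk_iff_joins.1 (hflow.1 q hq).1
  obtain ⟨l₁, l₂, rfl⟩ := List.append_of_mem hep
  obtain ⟨hs, ht⟩ := (hwalks _ hp).split_at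
  let S : Set V := {x | N.Reach x (N.tail e)}
  have heS : e ∈ N.outEdges S :=
    mem_outEdges.2 ⟨he, .inl rfl, hA.not_reach_of_joins (.single he)⟩
  have hupper : (N.del {e}).maxFlow + 1 ≤ ps.length := calc
    _ ≤ ((N.outEdges S).erase e).card + 1 := by
        rw [← Finset.sdiff_singleton_eq_erase, ← outEdges_del]
        exact Nat.add_le_add_right (maxFlow_le_card_outEdges (reach_iff.2 hs)
          (hA.not_reach_of_joins ht)) 1
    _ = (N.outEdges S).card := Finset.card_erase_add_one heS
    _ ≤ ps.length := card_outEdges_le_length (fun f hf => Reach.of_head hf)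
        (fun q hq => ⟨_, _, hwalks q hq⟩) hcover
  have hlower : ps.length - 1 ≤ (N.del {e}).maxFlow :=
    (hflow.hasFlow_del_of_subset hp (by simp)).le_maxFlow
  omega
end

section
/- Let N=(V,E,s,t) be an acyclic unit-capacity point-to-point network and let F be a k-CF of N with k < C_N(s,t). Then there exists a (k+1)-CF F' of N with F ⊆ F'. -/
open Network

/-!
Deleting one edge lowers the maximum flow by at most one, since at most one path of a flow uses
it; hence a `k`-CF `F` has `C_{N\F} = C_N - k ≥ 1`. Take a maximum flow of `N \ F` and let `S` be
the set of vertices reachable from `s` in its residual network. As `s ≠ t`, the symmetric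
difference of the flow with an augmenting path would decompose into more edge-disjoint `s`-`t`
paths, so `t ∉ S`. No flow edge enters `S`, so each flow path leaves `S` at most once and the cut
of `S` has at most `C_{N\F}` edges. Deleting a cut edge `e` therefore lowers `C_{N\F}` by one,
and `insert e F` is a `(k+1)`-CF: a proper subset either avoids `e` and lies in `F`, or is
`insert e F'` with `F' ⊊ F`.
-/

namespace Network

section Walk

variable {V ε : Type} {M : Network V ε} {u v w : V} {p q : List ε} {e f : ε}

inductive Walk (M : Network V ε) : V → V → List ε → Prop
  | single {e : ε} : e ∈ M.edges → Walk M (M.tail e) (M.head e) [e]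
  | cons {e : ε} {v : V} {p : List ε} : e ∈ M.edges → Walk M (M.head e) v p →
      Walk M (M.tail e) v (e :: p)

theorem isWalk_singleton : M.IsWalk u v [e] ↔ e ∈ M.edges ∧ M.tail e = u ∧ M.head e = v := by
  simp [IsWalk]

theorem isWalk_cons_cons :
    M.IsWalk u v (e :: f :: p) ↔ e ∈ M.edges ∧ M.tail e = u ∧ M.IsWalk (M.head e) v (f :: p) := by
  simp only [IsWalk, ne_eq, reduceCtorEq, not_false_eq_true, List.mem_cons, forall_eq_or_imp,
    List.length_cons, List.get_eq_getElem, true_and]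
  constructor
  · rintro ⟨⟨he, hedges⟩, hadj, hu, hv⟩
    exact ⟨he, hu (by omega), hedges, fun i h => hadj (i + 1) (by omega),
      fun _ => (hadj 0 (by omega)).symm, fun h => by simpa using hv (by omega)⟩
  · rintro ⟨he, hu, hedges, hadj, hf, hv⟩
    refine ⟨⟨he, hedges⟩, ?_, fun _ => hu, fun _ => by simpa using hv (by omega)⟩
    rintro (_ | i) h
    · exact (hf (by omega)).symm
    · exact hadj i (by omega)

theorem Walk.ne_nil (hw : M.Walk u v p) : p ≠ [] := by
  cases hw <;> simp

theorem walk_singleton_iff : M.Walk u v [e] ↔ e ∈ M.edges ∧ M.tail e = u ∧ M.head e = v := by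
  constructor
  · intro hw
    cases hw with
    | single he => exact ⟨he, rfl, rfl⟩
    | cons _ hw => exact absurd rfl hw.ne_nil
  · rintro ⟨he, rfl, rfl⟩
    exact .single he

theorem walk_cons_cons_iff :
    M.Walk u v (e :: f :: p) ↔ e ∈ M.edges ∧ M.tail e = u ∧ M.Walk (M.head e) v (f :: p) := by
  constructor
  · rintro ⟨⟩
    exact ⟨‹_›, rfl, ‹_›⟩
  · rintro ⟨he, rfl, hw⟩
    exact .cons he hw

theorem isWalk_iff_walk : M.IsWalk u v p ↔ M.Walk u v p := by
  induction p generalizing u with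
  | nil => exact ⟨fun h => absurd rfl h.1, fun h => nomatch h⟩
  | cons e p ih =>
    cases p with
    | nil => rw [isWalk_singleton, walk_singleton_iff]
    | cons f p => rw [isWalk_cons_cons, walk_cons_cons_iff, ih]

theorem Walk.mem_edges (hw : M.Walk u v p) (he : e ∈ p) : e ∈ M.edges := by
  induction hw with
  | single h => rwa [List.mem_singleton.1 he]
  | cons h _ ih =>
    rcases List.mem_cons.1 he with rfl | he
    exacts [h, ih he]

theorem Walk.append (hp : M.Walk u v p) (hq : M.Walk v w q) : M.Walk u w (p ++ q) := by
  induction hp with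
  | single he => exact .cons he hq
  | cons he _ ih => exact .cons he (ih hq)

theorem Walk.of_cons (hw : M.Walk u v (e :: p)) (hp : p ≠ []) : M.Walk (M.head e) v p := by
  cases p with
  | nil => exact absurd rfl hp
  | cons f p => exact (walk_cons_cons_iff.1 hw).2.2

theorem Walk.of_append_cons (hw : M.Walk u v (p ++ e :: q)) : M.Walk (M.tail e) v (e :: q) := by
  induction p generalizing u with
  | nil =>
    rw [List.nil_append] at hw
    obtain rfl : u = M.tail e := by cases hw <;> rfl
    exact hw
  | cons f p ih => exact ih (hw.of_cons (by simp))

theorem Walk.exists_nodup (hw : M.Walk u v p) : ∃ q, M.Walk u v q ∧ q.Nodup := by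
  induction hw with
  | single he => exact ⟨_, .single he, List.nodup_singleton _⟩
  | @cons e v p he _ ih =>
    obtain ⟨q, hq, hnd⟩ := ih
    by_cases heq : e ∈ q
    · obtain ⟨a, b, rfl⟩ := List.append_of_mem heq
      exact ⟨e :: b, hq.of_append_cons, hnd.sublist (List.sublist_append_right _ _)⟩
    · exact ⟨e :: q, .cons he hq, List.nodup_cons.2 ⟨heq, hnd⟩⟩

end Walk

section Flow

variable {V ε : Type} {M : Network V ε} {u v : V} {p : List ε} {fs : List (List ε)} {n : ℕ}

theorem length_le_card_of_pairwise_disjoint [DecidableEq ε] :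
    ∀ {fs : List (List ε)} {T : Finset ε}, fs.Pairwise (fun p q => ∀ e ∈ p, e ∉ q) →
      (∀ p ∈ fs, ∃ e ∈ p, e ∈ T) → fs.length ≤ T.card
  | [], _, _, _ => by simp
  | p :: fs, T, hdisj, hmeet => by
    obtain ⟨e, hep, heT⟩ := hmeet p List.mem_cons_self
    rw [List.pairwise_cons] at hdisj
    have hrest : fs.length ≤ (T.erase e).card := by
      refine length_le_card_of_pairwise_disjoint hdisj.2 fun q hq => ?_
      obtain ⟨f, hfq, hfT⟩ := hmeet q (List.mem_cons_of_mem p hq)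
      exact ⟨f, hfq, Finset.mem_erase.2 ⟨fun hfe => hdisj.1 q hq e hep (hfe ▸ hfq), hfT⟩⟩
    rw [Finset.card_erase_of_mem heT] at hrest
    have := Finset.card_pos.2 ⟨e, heT⟩
    rw [List.length_cons]
    omega

theorem bddAbove_setOf_hasFlow (M : Network V ε) : BddAbove {n | M.HasFlow n} := by
  classical
  refine ⟨M.edges.card, ?_⟩
  rintro _ ⟨fs, hfs, rfl⟩
  refine length_le_card_of_pairwise_disjoint hfs.2 fun p hp => ?_
  obtain ⟨e, he⟩ := List.exists_mem_of_ne_nil p (hfs.1 p hp).1.1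
  exact ⟨e, he, (hfs.1 p hp).1.2.1 e he⟩

theorem HasFlow.le_maxFlow_s3 (h : M.HasFlow n) : n ≤ M.maxFlow :=
  le_csSup M.bddAbove_setOf_hasFlow h

theorem hasFlow_maxFlow (M : Network V ε) : M.HasFlow M.maxFlow :=
  Nat.sSup_mem (s := {n | M.HasFlow n}) ⟨0, [], ⟨by simp, .nil⟩, rfl⟩ M.bddAbove_setOf_hasFlow

variable [DecidableEq ε] {F F' : Finset ε} {e : ε}

theorem isWalk_del_iff : (M.del F).IsWalk u v p ↔ M.IsWalk u v p ∧ ∀ e ∈ p, e ∉ F := by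
  simp only [IsWalk, del, Finset.mem_sdiff]
  constructor
  · rintro ⟨hne, hedges, hrest⟩
    exact ⟨⟨hne, fun e he => (hedges e he).1, hrest⟩, fun e he => (hedges e he).2⟩
  · rintro ⟨⟨hne, hedges, hrest⟩, hF⟩
    exact ⟨hne, fun e he => ⟨hedges e he, hF e he⟩, hrest⟩

theorem isFlowList_del_iff :
    (M.del F).IsFlowList fs ↔ M.IsFlowList fs ∧ ∀ p ∈ fs, ∀ e ∈ p, e ∉ F := by
  simp only [IsFlowList, IsPath, isWalk_del_iff]
  constructor
  · rintro ⟨hpaths, hdisj⟩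
    exact ⟨⟨fun p hp => ⟨(hpaths p hp).1.1, (hpaths p hp).2⟩, hdisj⟩, fun p hp => (hpaths p hp).1.2⟩
  · rintro ⟨⟨hpaths, hdisj⟩, hF⟩
    exact ⟨fun p hp => ⟨⟨(hpaths p hp).1, hF p hp⟩, (hpaths p hp).2⟩, hdisj⟩

theorem maxFlow_del_anti (h : F ⊆ F') : (M.del F').maxFlow ≤ (M.del F).maxFlow := by
  obtain ⟨fs, hfs, hlen⟩ := (M.del F').hasFlow_maxFlow
  rw [isFlowList_del_iff] at hfs
  rw [← hlen]
  exact HasFlow.le_maxFlow_s3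
    ⟨fs, isFlowList_del_iff.2 ⟨hfs.1, fun p hp e he heF => hfs.2 p hp e he (h heF)⟩, rfl⟩

theorem maxFlow_del_le_insert : (M.del F).maxFlow ≤ (M.del (insert e F)).maxFlow + 1 := by
  obtain ⟨fs, hfs, hlen⟩ := (M.del F).hasFlow_maxFlow
  rw [isFlowList_del_iff] at hfs
  have hthrough : (fs.filter (e ∈ ·)).length ≤ ({e} : Finset ε).card :=
    length_le_card_of_pairwise_disjoint (hfs.1.2.filter _) fun p hp =>
      ⟨e, by simpa using (List.mem_filter.1 hp).2, Finset.mem_singleton_self e⟩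
  have havoid : (M.del (insert e F)).HasFlow (fs.filter (e ∉ ·)).length := by
    refine ⟨_, isFlowList_del_iff.2 ⟨⟨fun p hp => hfs.1.1 p (List.mem_of_mem_filter hp),
      hfs.1.2.filter _⟩, fun p hp f hf => ?_⟩, rfl⟩
    rw [Finset.mem_insert, not_or]
    have hep : e ∉ p := by simpa using (List.mem_filter.1 hp).2
    exact ⟨fun hfe => hep (hfe ▸ hf), hfs.2 p (List.mem_of_mem_filter hp) f hf⟩
  have hsplit := (List.filter_append_perm (e ∈ ·) fs).length_eq
  simp only [List.length_append, Finset.card_singleton] at hsplit hthrough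
  have := havoid.le_maxFlow_s3
  simp only [decide_not] at this
  omega

end Flow

section NetOut

variable {V ε : Type} {M : Network V ε} {u v w : V} {p : List ε} {fs : List (List ε)}
  {T T' : Finset ε} {e : ε}

open Classical in
noncomputable def boundary (u v w : V) : ℤ := (if w = u then 1 else 0) - (if w = v then 1 else 0)

noncomputable def netOut (M : Network V ε) (T : Finset ε) (w : V) : ℤ :=
  ∑ e ∈ T, boundary (M.tail e) (M.head e) w

theorem netOut_singleton : M.netOut {e} w = boundary (M.tail e) (M.head e) w := by
  simp [netOut]

theorem exists_mem_tail_of_netOut_pos (h : 0 < M.netOut T u) : ∃ e ∈ T, M.tail e = u := by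
  by_contra! hno
  refine h.not_ge (Finset.sum_nonpos fun e he => ?_)
  unfold boundary
  rw [if_neg (Ne.symm (hno e he))]
  split_ifs <;> norm_num

variable [DecidableEq ε]

theorem netOut_insert (he : e ∉ T) :
    M.netOut (insert e T) w = boundary (M.tail e) (M.head e) w + M.netOut T w :=
  Finset.sum_insert he

theorem netOut_union (h : Disjoint T T') : M.netOut (T ∪ T') w = M.netOut T w + M.netOut T' w :=
  Finset.sum_union h

theorem netOut_sdiff (h : T' ⊆ T) : M.netOut (T \ T') w = M.netOut T w - M.netOut T' w :=
  Finset.sum_sdiff_eq_sub h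

theorem boundary_add_boundary (u v w x : V) : boundary u v x + boundary v w x = boundary u w x := by
  unfold boundary
  ring

theorem Walk.netOut_toFinset (hw : M.Walk u v p) (hnd : p.Nodup) :
    M.netOut p.toFinset w = boundary u v w := by
  induction hw with
  | single => simp [netOut_singleton]
  | cons _ _ ih =>
    rw [List.nodup_cons] at hnd
    rw [List.toFinset_cons, netOut_insert (by simpa using hnd.1), ih hnd.2, boundary_add_boundary]

theorem mem_usedEdges : e ∈ usedEdges fs ↔ ∃ p ∈ fs, e ∈ p := by
  simp [usedEdges]

theorem usedEdges_cons (p : List ε) (fs : List (List ε)) :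
    usedEdges (p :: fs) = p.toFinset ∪ usedEdges fs := by
  simp [usedEdges]

theorem IsFlowList.netOut_usedEdges (hfs : M.IsFlowList fs) :
    M.netOut (usedEdges fs) w = fs.length * boundary M.s M.t w := by
  induction fs with
  | nil => simp [usedEdges, netOut]
  | cons p fs ih =>
    obtain ⟨hpaths, hdisj⟩ := hfs
    rw [List.pairwise_cons] at hdisj
    have hp := hpaths p List.mem_cons_self
    have hdisj' : Disjoint p.toFinset (usedEdges fs) := by
      refine Finset.disjoint_left.2 fun e hep hefs => ?_
      obtain ⟨q, hq, heq⟩ := mem_usedEdges.1 hefs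
      exact hdisj.1 q hq e (List.mem_toFinset.1 hep) heq
    rw [usedEdges_cons, netOut_union hdisj', (isWalk_iff_walk.1 hp.1).netOut_toFinset hp.2,
      ih ⟨fun q hq => hpaths q (List.mem_cons_of_mem p hq), hdisj.2⟩, List.length_cons]
    push_cast
    ring

theorem exists_walk_of_netOut (hT : T ⊆ M.edges) (huv : u ≠ v) (hu : 0 < M.netOut T u)
    (hrest : ∀ w, w ≠ u → w ≠ v → 0 ≤ M.netOut T w) :
    ∃ p, M.Walk u v p ∧ p.Nodup ∧ p.toFinset ⊆ T := by
  induction T using Finset.strongInduction generalizing u with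
  | H T ih =>
  obtain ⟨e, heT, rfl⟩ := exists_mem_tail_of_netOut_pos hu
  by_cases hev : M.head e = v
  · exact ⟨[e], hev ▸ .single (hT heT), List.nodup_singleton e, by simpa using heT⟩
  have herase (w : V) :
      M.netOut (T.erase e) w = M.netOut T w - boundary (M.tail e) (M.head e) w := by
    have := netOut_insert (M := M) (w := w) (Finset.notMem_erase e T)
    rw [Finset.insert_erase heT] at this
    omega
  have hpos : 0 < M.netOut (T.erase e) (M.head e) := by
    rw [herase]
    by_cases h : M.head e = M.tail e
    · simpa [boundary, h] using hu
    · have := hrest _ h hev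
      simp only [boundary, if_neg h, ↓reduceIte]
      omega
  have hnonneg (w : V) (hw : w ≠ M.head e) (hwv : w ≠ v) : 0 ≤ M.netOut (T.erase e) w := by
    rw [herase]
    by_cases h : w = M.tail e
    · subst h
      simp only [boundary, if_neg hw, ↓reduceIte]
      omega
    · simpa [boundary, h, hw] using hrest w h hwv
  obtain ⟨p, hp, hnd, hpT⟩ :=
    ih (T.erase e) (Finset.erase_ssubset heT) ((Finset.erase_subset e T).trans hT) hev hpos hnonneg
  refine ⟨e :: p, .cons (hT heT) hp, List.nodup_cons.2 ⟨fun hep => ?_, hnd⟩, ?_⟩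
  · exact Finset.notMem_erase e T (hpT (List.mem_toFinset.2 hep))
  · rw [List.toFinset_cons]
    exact Finset.insert_subset heT (hpT.trans (Finset.erase_subset e T))

theorem exists_isFlowList_of_netOut (hst : M.s ≠ M.t) :
    ∀ (c : ℕ) (T : Finset ε), T ⊆ M.edges → (∀ w, M.netOut T w = c * boundary M.s M.t w) →
      ∃ fs, M.IsFlowList fs ∧ fs.length = c ∧ usedEdges fs ⊆ T
  | 0, _, _, _ => ⟨[], ⟨by simp, .nil⟩, rfl, by simp [usedEdges]⟩
  | c + 1, T, hT, hnet => by
    obtain ⟨p, hp, hnd, hpT⟩ := exists_walk_of_netOut hT hst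
      (by simp [hnet, boundary, hst])
      fun w hws hwt => by simp [hnet, boundary, hws, hwt]
    obtain ⟨fs, hfs, hlen, hused⟩ := exists_isFlowList_of_netOut hst c (T \ p.toFinset)
      (Finset.sdiff_subset.trans hT) fun w => by
        rw [netOut_sdiff hpT, hnet, hp.netOut_toFinset hnd]
        push_cast
        ring
    refine ⟨p :: fs, ⟨?_, List.pairwise_cons.2 ⟨fun q hq e hep heq => ?_, hfs.2⟩⟩, by simp [hlen], ?_⟩
    · rintro q (_ | ⟨_, hq⟩)
      exacts [⟨isWalk_iff_walk.2 hp, hnd⟩, hfs.1 q hq]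
    · exact (Finset.mem_sdiff.1 (hused (mem_usedEdges.2 ⟨q, hq, heq⟩))).2 (List.mem_toFinset.2 hep)
    · rw [usedEdges_cons]
      exact Finset.union_subset hpT (hused.trans Finset.sdiff_subset)

end NetOut

section Cut

variable {V ε : Type} {M : Network V ε} {S : Set V} {u v : V} {p : List ε} {e : ε}

theorem Reach.step (h : M.Reach u v) (he : e ∈ M.edges) (hv : M.tail e = v) :
    M.Reach u (M.head e) := by
  right
  rcases h with rfl | ⟨p, hp⟩
  · exact ⟨[e], isWalk_singleton.2 ⟨he, hv, rfl⟩⟩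
  · exact ⟨p ++ [e], isWalk_iff_walk.2 ((isWalk_iff_walk.1 hp).append (hv ▸ .single he))⟩

open Classical in
noncomputable def cut (M : Network V ε) (S : Set V) : Finset ε :=
  M.edges.filter fun e => M.tail e ∈ S ∧ M.head e ∉ S

theorem mem_cut : e ∈ M.cut S ↔ e ∈ M.edges ∧ M.tail e ∈ S ∧ M.head e ∉ S := by
  simp [cut]

theorem Walk.exists_mem_cut (hw : M.Walk u v p) (hu : u ∈ S) (hv : v ∉ S) :
    ∃ e ∈ p, e ∈ M.cut S := by
  induction hw with
  | single he => exact ⟨_, List.mem_singleton_self _, mem_cut.2 ⟨he, hu, hv⟩⟩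
  | @cons e v p he _ ih =>
    by_cases hh : M.head e ∈ S
    · obtain ⟨f, hf, hfc⟩ := ih hh hv
      exact ⟨f, List.mem_cons_of_mem e hf, hfc⟩
    · exact ⟨e, List.mem_cons_self, mem_cut.2 ⟨he, hu, hh⟩⟩

theorem Walk.tail_notMem (hw : M.Walk u v p) (hin : ∀ e ∈ p, M.head e ∈ S → M.tail e ∈ S)
    (hu : u ∉ S) : ∀ e ∈ p, M.tail e ∉ S := by
  induction hw with
  | single => simpa
  | cons _ _ ih =>
    intro f hf
    rcases List.mem_cons.1 hf with rfl | hf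
    · exact hu
    · exact ih (fun g hg => hin g (List.mem_cons_of_mem _ hg))
        (fun h => hu (hin _ List.mem_cons_self h)) f hf

theorem Walk.eq_of_mem_cut (hw : M.Walk u v p) (hin : ∀ e ∈ p, M.head e ∈ S → M.tail e ∈ S)
    {e₁ e₂ : ε} (h₁ : e₁ ∈ p) (h₂ : e₂ ∈ p) (hc₁ : e₁ ∈ M.cut S) (hc₂ : e₂ ∈ M.cut S) :
    e₁ = e₂ := by
  induction hw with
  | single => rw [List.mem_singleton.1 h₁, List.mem_singleton.1 h₂]
  | @cons e v p he hw ih =>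
    have hin' : ∀ f ∈ p, M.head f ∈ S → M.tail f ∈ S := fun f hf => hin f (List.mem_cons_of_mem e hf)
    have hlast (hc : e ∈ M.cut S) (f : ε) (hf : f ∈ p) (hfc : f ∈ M.cut S) : False :=
      hw.tail_notMem hin' (mem_cut.1 hc).2.2 f hf (mem_cut.1 hfc).2.1
    rw [List.mem_cons] at h₁ h₂
    rcases h₁ with rfl | h₁ <;> rcases h₂ with rfl | h₂
    · rfl
    · exact (hlast hc₁ e₂ h₂ hc₂).elim
    · exact (hlast hc₂ e₁ h₁ hc₁).elim
    · exact ih hin' h₁ h₂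

variable [DecidableEq ε] {fs : List (List ε)}

theorem IsFlowList.usedEdges_subset (hfs : M.IsFlowList fs) : usedEdges fs ⊆ M.edges := by
  intro e he
  obtain ⟨p, hp, hep⟩ := mem_usedEdges.1 he
  exact (hfs.1 p hp).1.2.1 e hep

theorem IsFlowList.card_cut_le (hfs : M.IsFlowList fs) (hcut : M.cut S ⊆ usedEdges fs)
    (hin : ∀ e ∈ usedEdges fs, M.head e ∈ S → M.tail e ∈ S) : (M.cut S).card ≤ fs.length := by
  have hpath (e : ε) (he : e ∈ M.cut S) : ∃ p ∈ fs, e ∈ p := mem_usedEdges.1 (hcut he)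
  choose! path hpath_mem hmem_path using hpath
  refine le_trans (Finset.card_le_card_of_injOn path (t := fs.toFinset)
    (fun e he => List.mem_toFinset.2 (hpath_mem e he)) fun e₁ he₁ e₂ he₂ heq => ?_) fs.toFinset_card_le
  have hw := isWalk_iff_walk.1 (hfs.1 _ (hpath_mem e₁ he₁)).1
  refine hw.eq_of_mem_cut (fun f hf => hin f (mem_usedEdges.2 ⟨_, hpath_mem e₁ he₁, hf⟩))
    (hmem_path e₁ he₁) ?_ he₁ he₂
  rw [heq]
  exact hmem_path e₂ he₂

end Cut

section Residual

variable {V ε : Type} [DecidableEq ε] {M : Network V ε} {U T : Finset ε} {w : V}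
  {fs : List (List ε)}

theorem boundary_swap (u v w : V) : boundary v u w = -boundary u v w := by
  unfold boundary
  ring

theorem netOut_residual :
    (M.residual U).netOut T w = M.netOut (T \ U) w - M.netOut (T ∩ U) w := by
  have hterm (e : ε) : boundary ((M.residual U).tail e) ((M.residual U).head e) w =
      if e ∈ U then -boundary (M.tail e) (M.head e) w else boundary (M.tail e) (M.head e) w := by
    simp only [residual]
    split_ifs
    exacts [boundary_swap _ _ _, rfl]
  rw [netOut, Finset.sum_congr rfl fun e _ => hterm e, Finset.sum_ite, Finset.sum_neg_distrib,
    Finset.filter_mem_eq_inter, Finset.filter_notMem_eq_sdiff]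
  unfold netOut
  ring

/-- Augmenting along `T` in the residual network of `U` means passing to `U ∆ T`. -/
theorem netOut_symmDiff :
    M.netOut (symmDiff U T) w = M.netOut U w + (M.residual U).netOut T w := by
  rw [Finset.symmDiff_def, netOut_union disjoint_sdiff_sdiff, netOut_residual,
    ← Finset.sdiff_inter_self_left, netOut_sdiff Finset.inter_subset_left, Finset.inter_comm]
  ring

theorem IsFlowList.not_reach_residual (hfs : M.IsFlowList fs) (hmax : M.maxFlow ≤ fs.length)
    (hst : M.s ≠ M.t) : ¬(M.residual (usedEdges fs)).Reach M.s M.t := by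
  rintro (h | ⟨p, hp⟩)
  · exact hst h
  obtain ⟨q, hq, hnd⟩ := (isWalk_iff_walk.1 hp).exists_nodup
  have hsub : symmDiff (usedEdges fs) q.toFinset ⊆ M.edges :=
    Finset.symmDiff_subset_union.trans <| Finset.union_subset hfs.usedEdges_subset
      fun e he => hq.mem_edges (List.mem_toFinset.1 he)
  obtain ⟨gs, hgs, hlen, -⟩ := exists_isFlowList_of_netOut hst (fs.length + 1) _ hsub fun w => by
    rw [netOut_symmDiff, hfs.netOut_usedEdges, hq.netOut_toFinset hnd]
    push_cast
    ring
  have := HasFlow.le_maxFlow_s3 ⟨gs, hgs, hlen⟩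
  omega

theorem exists_card_cut_le_maxFlow (hst : M.s ≠ M.t) :
    ∃ S : Set V, M.s ∈ S ∧ M.t ∉ S ∧ (M.cut S).card ≤ M.maxFlow := by
  obtain ⟨fs, hfs, hlen⟩ := M.hasFlow_maxFlow
  set R := M.residual (usedEdges fs)
  refine ⟨{v | R.Reach M.s v}, Or.inl rfl, hfs.not_reach_residual hlen.ge hst,
    hlen ▸ hfs.card_cut_le (fun e he => ?_) fun e he hh => ?_⟩
  · rw [mem_cut] at he
    by_contra hU
    refine he.2.2 ?_
    simpa [R, residual, hU] using Reach.step (M := R) he.2.1 he.1 (by simp [R, residual, hU])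
  · simpa [R, residual, he] using
      Reach.step (M := R) hh (hfs.usedEdges_subset he) (by simp [R, residual, he])

end Residual

variable {V ε : Type} {M : Network V ε}

theorem exists_isPath_of_maxFlow_pos (h : 0 < M.maxFlow) : ∃ p, M.IsPath p := by
  obtain ⟨fs, hfs, hlen⟩ := M.hasFlow_maxFlow
  obtain ⟨p, hp⟩ := List.exists_mem_of_ne_nil fs (by rintro rfl; simp at hlen; omega)
  exact ⟨p, hfs.1 p hp⟩

theorem Acyclic.source_ne_sink (hA : M.Acyclic) (h : 0 < M.maxFlow) : M.s ≠ M.t := by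
  intro hst
  obtain ⟨p, hp, hnd⟩ := exists_isPath_of_maxFlow_pos h
  exact hA p ⟨M.s, hst ▸ hp, hnd⟩

variable [DecidableEq ε] {S : Set V} {e : ε}

theorem maxFlow_del_lt_card_cut (hs : M.s ∈ S) (ht : M.t ∉ S) (he : e ∈ M.cut S) :
    (M.del {e}).maxFlow < (M.cut S).card := by
  obtain ⟨fs, hfs, hlen⟩ := (M.del {e}).hasFlow_maxFlow
  rw [isFlowList_del_iff] at hfs
  have hle : fs.length ≤ ((M.cut S).erase e).card :=
    length_le_card_of_pairwise_disjoint hfs.1.2 fun p hp => by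
      obtain ⟨f, hfp, hf⟩ := (isWalk_iff_walk.1 (hfs.1.1 p hp).1).exists_mem_cut hs ht
      exact ⟨f, hfp, Finset.mem_erase.2 ⟨fun hfe => hfs.2 p hp f hfp (by simp [hfe]), hf⟩⟩
  rw [Finset.card_erase_of_mem he] at hle
  have := Finset.card_pos.2 ⟨e, he⟩
  omega

theorem exists_maxFlow_del_lt (hst : M.s ≠ M.t) (h : 0 < M.maxFlow) :
    ∃ e ∈ M.edges, (M.del {e}).maxFlow < M.maxFlow := by
  obtain ⟨S, hs, ht, hcard⟩ := M.exists_card_cut_le_maxFlow hst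
  obtain ⟨p, hp, -⟩ := exists_isPath_of_maxFlow_pos h
  obtain ⟨e, -, he⟩ := (isWalk_iff_walk.1 hp).exists_mem_cut hs ht
  exact ⟨e, (mem_cut.1 he).1, (maxFlow_del_lt_card_cut hs ht he).trans_le hcard⟩

theorem del_del (F F' : Finset ε) : (M.del F).del F' = M.del (F ∪ F') := by
  simp only [del, sdiff_sdiff_left, Finset.sup_eq_union]

variable {N : Network V ε} {k : ℕ} {F : Finset ε}

theorem IsKCF.maxFlow_del_add (hF : N.IsKCF k F) : (N.del F).maxFlow + k = N.maxFlow := by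
  obtain ⟨⟨f, hf⟩, -, hle, hmin⟩ := hF
  have := hmin _ (Finset.erase_ssubset hf)
  have := maxFlow_del_le_insert (M := N) (F := F.erase f) (e := f)
  rw [Finset.insert_erase hf] at this
  omega

theorem IsKCF.insert (hF : N.IsKCF k F) (he : e ∈ N.edges)
    (hdrop : (N.del (insert e F)).maxFlow < (N.del F).maxFlow) : N.IsKCF (k + 1) (insert e F) := by
  have hexact := hF.maxFlow_del_add
  refine ⟨Finset.insert_nonempty e F, Finset.insert_subset he hF.2.1, by omega, fun F' hF' => ?_⟩
  by_cases heF' : e ∈ F'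
  · have hsub : F'.erase e ⊂ F := by
      refine Finset.ssubset_iff_subset_ne.2 ⟨fun f hf => ?_, fun h => hF'.ne ?_⟩
      · obtain ⟨hfe, hf⟩ := Finset.mem_erase.1 hf
        exact (Finset.mem_insert.1 (hF'.subset hf)).resolve_left hfe
      · rw [← h, Finset.insert_erase heF']
    have := hF.2.2.2 _ hsub
    have := maxFlow_del_le_insert (M := N) (F := F'.erase e) (e := e)
    rw [Finset.insert_erase heF'] at this
    omega
  · have hsub : F' ⊆ F := fun f hf =>
      (Finset.mem_insert.1 (hF'.subset hf)).resolve_left fun hfe => heF' (hfe ▸ hf)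
    have := maxFlow_del_anti (M := N) hsub
    omega

end Network

/-- In an acyclic network, every `k`-CF with `k < C_N(s,t)` is contained in
some `(k+1)`-CF. -/
theorem kCF_subset_succ_kCF {V ε : Type} [DecidableEq ε]
    (N : Network V ε) (hA : N.Acyclic) (k : ℕ) (F : Finset ε)
    (hF : N.IsKCF k F) (hk : k < N.maxFlow) :
    ∃ F', N.IsKCF (k + 1) F' ∧ F ⊆ F' := by
  have hpos : 0 < (N.del F).maxFlow := by
    have := hF.maxFlow_del_add
    omega
  obtain ⟨e, he, hdrop⟩ := (N.del F).exists_maxFlow_del_lt (hA.source_ne_sink (by omega)) hpos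
  rw [del_del, Finset.union_singleton] at hdrop
  exact ⟨insert e F, hF.insert (Finset.mem_sdiff.1 he).1 hdrop, Finset.subset_insert e F⟩
end
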